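/- Let G be a connected P5-free chordal bipartite graph with bipartition (A,B) where |A| = |B| + 1, maximum biclique (A1,B1), and NNO orderings A2 = (u_1,...,u_p), B2 = (v_1,...,v_q). If G has a Hamiltonian path, then deg(u_g) ≥ g for all 1 ≤ g ≤ p and deg(v_h) > h for all 1 ≤ h ≤ q. -/

import Mathlib

/-!
In a connected `P₅`-free bipartite graph the neighbourhoods of the vertices on one side form a
chain under inclusion: two vertices with incomparable neighbourhoods and a common neighbour span an
induced `P₅`, and comparability propagates along walks. So in an NNO ordering the neighbourhoods
of `u₁, …, u_g` all lie in `N(u_g)`. On a Hamiltonian path, stepping from each `uᵢ` one vertex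
towards some `z ∉ N(u_g)` (which exists since `u_g` is outside the maximal biclique) injects
`{u₁, …, u_g}` into `N(u_g)`. On the other side, `|A| = |B| + 1` forces both ends of the path into
`A`, so `v₁, …, v_h` are interior; their predecessors together with the successor of the last of
them are `h + 1` distinct vertices of `N(v_h)`.
-/

open SimpleGraph Finset

variable {V : Type*}

/-- `(A, B)` is a bipartition of the graph `G`. -/
def IsBipartitionOf (G : SimpleGraph V) (A B : Finset V) : Prop :=
  Disjoint A B ∧ (∀ v : V, v ∈ A ∨ v ∈ B) ∧
    ∀ ⦃x y : V⦄, G.Adj x y → (x ∈ A ∧ y ∈ B) ∨ (x ∈ B ∧ y ∈ A)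

/-- `G` has no induced path on `n` vertices. -/
def PFree (n : ℕ) (G : SimpleGraph V) : Prop :=
  ∀ f : Fin n → V, Function.Injective f →
    ¬ (∀ i j : Fin n, G.Adj (f i) (f j) ↔ ((i : ℕ) + 1 = (j : ℕ) ∨ (j : ℕ) + 1 = (i : ℕ)))

/-- Every cycle of length at least 6 has a chord. -/
def ChordalBipartite (G : SimpleGraph V) : Prop :=
  ∀ (v : V) (c : G.Walk v v), c.IsCycle → 6 ≤ c.length →
    ∃ x y : V, x ∈ c.support ∧ y ∈ c.support ∧ G.Adj x y ∧ s(x, y) ∉ c.edges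

/-- `(A1, B1)` is a maximal biclique of `G` within the bipartition `(A, B)`:
it is a complete bipartite subgraph and no vertex can be added to either side. -/
def IsMaximalBiclique (G : SimpleGraph V) (A B A1 B1 : Finset V) : Prop :=
  A1 ⊆ A ∧ B1 ⊆ B ∧ (∀ x ∈ A1, ∀ y ∈ B1, G.Adj x y) ∧
    (∀ x ∈ A, (∀ y ∈ B1, G.Adj x y) → x ∈ A1) ∧
    (∀ y ∈ B, (∀ x ∈ A1, G.Adj x y) → y ∈ B1)


namespace IsBipartitionOf

variable {G : SimpleGraph V} {A B : Finset V} {x x' y : V}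

lemma symm (h : IsBipartitionOf G A B) : IsBipartitionOf G B A :=
  ⟨h.1.symm, fun v => (h.2.1 v).symm, fun _ _ hxy => (h.2.2 hxy).symm⟩

lemma notMem_right (h : IsBipartitionOf G A B) (hx : x ∈ A) : x ∉ B :=
  disjoint_left.mp h.1 hx

lemma mem_right_of_adj (h : IsBipartitionOf G A B) (hx : x ∈ A) (hxy : G.Adj x y) : y ∈ B :=
  ((h.2.2 hxy).resolve_right fun hx' => h.notMem_right hx hx'.1).2

lemma not_adj (h : IsBipartitionOf G A B) (hx : x ∈ A) (hy : y ∈ A) : ¬ G.Adj x y :=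
  fun hxy => h.notMem_right hy (h.mem_right_of_adj hx hxy)

lemma adj_of_pFree_five (h : IsBipartitionOf G A B) (hp5 : PFree 5 G) {y₁ x₁ z x₂ y₂ : V}
    (hy₁ : y₁ ∈ B) (hx₁ : x₁ ∈ A) (hz : z ∈ B) (hx₂ : x₂ ∈ A) (hy₂ : y₂ ∈ B)
    (h₁ : G.Adj y₁ x₁) (h₂ : G.Adj x₁ z) (h₃ : G.Adj z x₂) (h₄ : G.Adj x₂ y₂)
    (hn : ¬ G.Adj x₂ y₁) : G.Adj x₁ y₂ := by
  by_contra hn'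
  have hA := fun {a b} (ha : a ∈ A) (hb : b ∈ A) => h.not_adj ha hb
  have hB := fun {a b} (ha : a ∈ B) (hb : b ∈ B) => h.symm.not_adj ha hb
  have hAB := fun {a} (ha : a ∈ A) => h.notMem_right ha
  refine hp5 ![y₁, x₁, z, x₂, y₂] ?_ ?_
  · intro i j hij
    fin_cases i <;> fin_cases j <;> simp at hij ⊢ <;> subst hij <;>
      grind [SimpleGraph.Adj.symm, SimpleGraph.irrefl]
  · intro i j
    fin_cases i <;> fin_cases j <;> simp <;> grind [SimpleGraph.Adj.symm, SimpleGraph.irrefl]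

lemma symmGen_neighborSet_of_adj_of_adj (h : IsBipartitionOf G A B) (hp5 : PFree 5 G)
    {z : V} (hx : x ∈ A) (hx' : x' ∈ A) (hxz : G.Adj x z) (hx'z : G.Adj x' z) :
    Relation.SymmGen (· ⊆ ·) (G.neighborSet x) (G.neighborSet x') := by
  by_contra hcon
  simp only [Relation.SymmGen, not_or, Set.not_subset] at hcon
  obtain ⟨⟨y, hxy, hx'y⟩, ⟨y', hx'y', hxy'⟩⟩ := hcon
  exact hxy' (h.adj_of_pFree_five hp5 (h.mem_right_of_adj hx hxy) hx (h.mem_right_of_adj hx hxz)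
    hx' (h.mem_right_of_adj hx' hx'y') hxy.symm hxz hx'z.symm hx'y' hx'y)

lemma symmGen_neighborSet_of_adj_of_symmGen (h : IsBipartitionOf G A B) (hp5 : PFree 5 G)
    {b c : V} (hx : x ∈ A) (hc : c ∈ A) (hx' : x' ∈ A) (hxb : G.Adj x b) (hcb : G.Adj c b)
    (hcx' : Relation.SymmGen (· ⊆ ·) (G.neighborSet c) (G.neighborSet x')) :
    Relation.SymmGen (· ⊆ ·) (G.neighborSet x) (G.neighborSet x') := by
  rcases hcx' with hcx' | hx'c
  · exact h.symmGen_neighborSet_of_adj_of_adj hp5 hx hx' hxb (hcx' hcb)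
  rcases h.symmGen_neighborSet_of_adj_of_adj hp5 hx hc hxb hcb with hxc | hcx
  · -- both neighbourhoods lie in `N(c)`, so incomparability would give the induced `P₅`
    -- `x - y - c - y' - x'`
    by_contra hcon
    simp only [Relation.SymmGen, not_or, Set.not_subset] at hcon
    obtain ⟨⟨y, hxy, hx'y⟩, ⟨y', hx'y', hxy'⟩⟩ := hcon
    exact hx'y (h.symm.adj_of_pFree_five hp5 hx (h.mem_right_of_adj hx hxy) hc
      (h.mem_right_of_adj hx' hx'y') hx' hxy (hxc hxy).symm (hx'c hx'y') hx'y'.symm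
      fun hy'x => hxy' hy'x.symm).symm
  · exact .inr (hx'c.trans hcx)

theorem symmGen_neighborSet (h : IsBipartitionOf G A B) (hp5 : PFree 5 G) (hconn : G.Connected)
    (hx : x ∈ A) (hx' : x' ∈ A) :
    Relation.SymmGen (· ⊆ ·) (G.neighborSet x) (G.neighborSet x') := by
  obtain ⟨w⟩ := hconn.preconnected x x'
  -- walks alternate sides, so at a vertex of `B` the invariant is stated for its neighbours
  suffices ∀ {u v} (w : G.Walk u v), v ∈ A →
      (u ∈ A → Relation.SymmGen (· ⊆ ·) (G.neighborSet u) (G.neighborSet v)) ∧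
      (u ∈ B → ∀ c, G.Adj u c → Relation.SymmGen (· ⊆ ·) (G.neighborSet c) (G.neighborSet v)) from
    (this w hx').1 hx
  intro u v w hv
  induction w with
  | nil => exact ⟨fun _ => .refl _ _, fun hu => absurd hu (h.notMem_right hv)⟩
  | cons huu' _ ih =>
    obtain ⟨ihA, ihB⟩ := ih hv
    refine ⟨fun hu => ihB (h.mem_right_of_adj hu huu') _ huu'.symm, fun hu c huc => ?_⟩
    have hu' := h.symm.mem_right_of_adj hu huu'
    exact h.symmGen_neighborSet_of_adj_of_symmGen hp5 (h.symm.mem_right_of_adj hu huc) hu' hv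
      huc.symm huu'.symm (ihA hu')

end IsBipartitionOf

lemma SimpleGraph.neighborSet_subset_of_symmGen_of_degree_le {G : SimpleGraph V} [G.LocallyFinite]
    {x y : V} (h : Relation.SymmGen (· ⊆ ·) (G.neighborSet x) (G.neighborSet y))
    (hdeg : G.degree x ≤ G.degree y) : G.neighborSet x ⊆ G.neighborSet y := by
  rcases h with hxy | hyx
  · exact hxy
  have hyx' : G.neighborFinset y ⊆ G.neighborFinset x := by
    rw [← coe_subset, coe_neighborFinset, coe_neighborFinset]; exact hyx
  rw [← coe_neighborFinset, ← coe_neighborFinset,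
    eq_of_subset_of_card_le hyx' (by simpa only [card_neighborFinset_eq_degree] using hdeg)]

lemma IsBipartitionOf.forall_adj_mem_neighborFinset_of_monotone [Fintype V] [DecidableEq V]
    {G : SimpleGraph V} [DecidableRel G.Adj] {A B : Finset V} (hbip : IsBipartitionOf G A B)
    (hp5 : PFree 5 G) (hconn : G.Connected) {n : ℕ} {f : Fin n → V} (hf : ∀ i, f i ∈ A)
    (hmono : ∀ i j : Fin n, i ≤ j → G.degree (f i) ≤ G.degree (f j)) (g : Fin n) :
    ∀ x ∈ (Iic g).image f, ∀ y, G.Adj x y → y ∈ G.neighborFinset (f g) := by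
  simp only [mem_image, mem_Iic, mem_neighborFinset, forall_exists_index, and_imp]
  rintro _ i hig rfl
  exact neighborSet_subset_of_symmGen_of_degree_le
    (hbip.symmGen_neighborSet hp5 hconn (hf i) (hf g)) (hmono i g hig)

namespace Finset

/-- Each `i ∈ I` steps one unit towards `k` and lands in `J`; steps from opposite sides of `k`
cannot collide because `k ∉ J`. -/
lemma card_le_card_of_forall_step_toward {I J : Finset ℕ} (k : ℕ) (hkI : k ∉ I) (hkJ : k ∉ J)
    (h : ∀ i ∈ I, (i < k → i + 1 ∈ J) ∧ (k < i → i - 1 ∈ J)) : #I ≤ #J := by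
  have hne : ∀ i ∈ I, i ≠ k ∧ (i < k → i + 1 ≠ k) := fun i hi =>
    ⟨fun e => hkI (e ▸ hi), fun hik e => hkJ (e ▸ (h i hi).1 hik)⟩
  refine card_le_card_of_injOn (fun i => if i < k then i + 1 else i - 1) (fun i hi => ?_)
    fun i hi j hj hij => ?_
  · have := (hne i hi).1
    dsimp only
    split_ifs with hik
    exacts [(h i hi).1 hik, (h i hi).2 (by omega)]
  · have := hne i hi
    have := hne j hj
    dsimp only at hij
    split_ifs at hij <;> omega

lemma card_lt_card_of_forall_pred_succ_mem {I J : Finset ℕ} (hI : I.Nonempty)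
    (h : ∀ i ∈ I, i - 1 ∈ J ∧ i + 1 ∈ J) : #I < #J := by
  have hmin : I.min' hI - 1 ∉ I.image (· + 1) := by
    simp only [mem_image, not_exists, not_and]
    intro i hi e
    have := I.min'_le i hi
    omega
  calc #I < #(insert (I.min' hI - 1) (I.image (· + 1))) := by
        rw [card_insert_of_notMem hmin, card_image_of_injective _ (add_left_injective 1)]
        exact Nat.lt_succ_self _
    _ ≤ #J := card_le_card <| insert_subset (h _ (I.min'_mem hI)).1 <|
        image_subset_iff.mpr fun i hi => (h i hi).2

end Finset

namespace SimpleGraph.Walk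

variable [DecidableEq V] {G : SimpleGraph V} {a b : V} {w : G.Walk a b} {U S : Finset V} {i : ℕ}

def positions (w : G.Walk a b) (U : Finset V) : Finset ℕ :=
  {i ∈ range (w.length + 1) | w.getVert i ∈ U}

lemma mem_positions : i ∈ w.positions U ↔ i ≤ w.length ∧ w.getVert i ∈ U := by
  simp [positions]

lemma IsHamiltonian.card_positions (hw : w.IsHamiltonian) (U : Finset V) :
    #(w.positions U) = #U := by
  have himage : (w.positions U).image w.getVert = U := by
    ext x
    simp only [mem_image, mem_positions]
    constructor
    · rintro ⟨i, ⟨_, hi⟩, rfl⟩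
      exact hi
    · intro hx
      obtain ⟨i, rfl, hi⟩ := mem_support_iff_exists_getVert.mp (hw.mem_support x)
      exact ⟨i, ⟨hi, hx⟩, rfl⟩
  conv_rhs => rw [← himage]
  exact (card_image_of_injOn <|
    hw.isPath.getVert_injOn.mono fun i hi => (mem_positions.mp hi).1).symm

lemma IsHamiltonian.reverse (hw : w.IsHamiltonian) : w.reverse.IsHamiltonian := fun x => by
  rw [support_reverse, List.count_reverse]
  exact hw x

lemma succ_mem_positions (hUS : ∀ x ∈ U, ∀ y, G.Adj x y → y ∈ S) (hi : i ∈ w.positions U)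
    (hlt : i < w.length) : i + 1 ∈ w.positions S :=
  mem_positions.mpr ⟨hlt, hUS _ (mem_positions.mp hi).2 _ (w.adj_getVert_succ hlt)⟩

lemma pred_mem_positions (hUS : ∀ x ∈ U, ∀ y, G.Adj x y → y ∈ S) (hi : i ∈ w.positions U)
    (hpos : 0 < i) : i - 1 ∈ w.positions S := by
  obtain ⟨hle, hiU⟩ := mem_positions.mp hi
  have hadj := w.adj_getVert_succ (i := i - 1) (by omega)
  rw [Nat.sub_add_cancel hpos] at hadj
  exact mem_positions.mpr ⟨by omega, hUS _ hiU _ hadj.symm⟩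

/-- Walking along `w` from each vertex of `U` one step towards `z` gives an injection into `S`. -/
theorem IsHamiltonian.card_le_card_of_forall_adj_mem (hw : w.IsHamiltonian)
    (hUS : ∀ x ∈ U, ∀ y, G.Adj x y → y ∈ S) {z : V} (hzU : z ∉ U) (hzS : z ∉ S) : #U ≤ #S := by
  obtain ⟨k, rfl, hk⟩ := mem_support_iff_exists_getVert.mp (hw.mem_support z)
  rw [← hw.card_positions U, ← hw.card_positions S]
  exact Finset.card_le_card_of_forall_step_toward k (fun h => hzU (mem_positions.mp h).2)
    (fun h => hzS (mem_positions.mp h).2) fun i hi =>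
      ⟨fun hik => succ_mem_positions hUS hi (by omega),
        fun hki => pred_mem_positions hUS hi (by omega)⟩

theorem IsHamiltonian.card_lt_card_of_forall_adj_mem (hw : w.IsHamiltonian)
    (hUS : ∀ x ∈ U, ∀ y, G.Adj x y → y ∈ S) (hU : U.Nonempty) (ha : a ∉ U) (hb : b ∉ U) :
    #U < #S := by
  rw [← hw.card_positions U, ← hw.card_positions S]
  refine Finset.card_lt_card_of_forall_pred_succ_mem ?_ fun i hi => ?_
  · rw [← card_pos, hw.card_positions]; exact hU.card_pos
  obtain ⟨hle, hiU⟩ := mem_positions.mp hi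
  have hi0 : i ≠ 0 := by rintro rfl; exact ha (w.getVert_zero ▸ hiU)
  have hin : i ≠ w.length := by rintro rfl; exact hb (w.getVert_length ▸ hiU)
  exact ⟨pred_mem_positions hUS hi (by omega), succ_mem_positions hUS hi (by omega)⟩

/-- If `b ∉ A`, every vertex of `A` has its successor on `w` in `B`, so `#A ≤ #B`. -/
theorem IsHamiltonian.end_mem_of_card_eq_add_one {A B : Finset V} (hw : w.IsHamiltonian)
    (hbip : IsBipartitionOf G A B) (hcard : #A = #B + 1) : b ∈ A := by
  by_contra hb
  have hAB : ∀ x ∈ A, ∀ y, G.Adj x y → y ∈ B := fun _ hx _ hxy => hbip.mem_right_of_adj hx hxy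
  have hsucc : ∀ i ∈ w.positions A, i + 1 ∈ w.positions B := fun i hi => by
    obtain ⟨hle, hiA⟩ := mem_positions.mp hi
    have hin : i ≠ w.length := by rintro rfl; exact hb (w.getVert_length ▸ hiA)
    exact succ_mem_positions hAB hi (by omega)
  have := card_le_card_of_injOn (· + 1) hsucc (add_left_injective 1).injOn
  rw [hw.card_positions, hw.card_positions] at this
  omega

end SimpleGraph.Walk

theorem stmt9_general [Fintype V] [DecidableEq V] (G : SimpleGraph V) [DecidableRel G.Adj]
    (A B A1 B1 : Finset V) {p q : ℕ} (u : Fin p → V) (v : Fin q → V)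
    (hconn : G.Connected) (hbip : IsBipartitionOf G A B)
    (hp5 : PFree 5 G)
    (hmax : IsMaximalBiclique G A B A1 B1)
    -- `u` enumerates `A \ A1` in non-decreasing degree order (NNO)
    (hu : Function.Injective u) (huA : ∀ i, u i ∈ A \ A1)
    (humono : ∀ i j : Fin p, i ≤ j → G.degree (u i) ≤ G.degree (u j))
    -- `v` enumerates `B \ B1` in non-decreasing degree order (NNO)
    (hv : Function.Injective v) (hvB : ∀ j, v j ∈ B \ B1)
    (hvmono : ∀ i j : Fin q, i ≤ j → G.degree (v i) ≤ G.degree (v j))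
    (hcard : A.card = B.card + 1)
    (hham : ∃ (a b : V) (w : G.Walk a b), w.IsHamiltonian) :
    (∀ g : Fin p, (g : ℕ) + 1 ≤ G.degree (u g)) ∧
      (∀ h : Fin q, (h : ℕ) + 1 < G.degree (v h)) := by
  obtain ⟨a, b, w, hw⟩ := hham
  have huA' i : u i ∈ A := (mem_sdiff.mp (huA i)).1
  have hvB' j : v j ∈ B := (mem_sdiff.mp (hvB j)).1
  refine ⟨fun g => ?_, fun h => ?_⟩
  · obtain ⟨z, hzB, hz⟩ : ∃ z ∈ B, ¬ G.Adj (u g) z := by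
      by_contra! hall
      exact (mem_sdiff.mp (huA g)).2 (hmax.2.2.2.1 _ (huA' g) fun y hy => hall y (hmax.2.1 hy))
    have hzU : z ∉ (Iic g).image u := fun hzU => by
      obtain ⟨i, _, rfl⟩ := mem_image.mp hzU
      exact hbip.notMem_right (huA' i) hzB
    have := hw.card_le_card_of_forall_adj_mem
      (hbip.forall_adj_mem_neighborFinset_of_monotone hp5 hconn huA' humono g) hzU
      (by simpa using hz)
    simpa [card_image_of_injective _ hu] using this
  · have hends : ∀ x ∈ A, x ∉ (Iic h).image v := fun x hx hxW => by
      obtain ⟨i, _, rfl⟩ := mem_image.mp hxW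
      exact hbip.notMem_right hx (hvB' i)
    have := hw.card_lt_card_of_forall_adj_mem
      (hbip.symm.forall_adj_mem_neighborFinset_of_monotone hp5 hconn hvB' hvmono h)
      ⟨v h, mem_image_of_mem v (mem_Iic.mpr le_rfl)⟩
      (hends a <| hw.reverse.end_mem_of_card_eq_add_one hbip hcard)
      (hends b <| hw.end_mem_of_card_eq_add_one hbip hcard)
    simpa [card_image_of_injective _ hv] using this

theorem stmt9 [Fintype V] [DecidableEq V] (G : SimpleGraph V) [DecidableRel G.Adj]
    (A B A1 B1 : Finset V) {p q : ℕ} (u : Fin p → V) (v : Fin q → V)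
    (hconn : G.Connected) (hbip : IsBipartitionOf G A B)
    (hcb : ChordalBipartite G) (hp5 : PFree 5 G)
    (hmax : IsMaximalBiclique G A B A1 B1)
    -- `u` enumerates `A \ A1` in non-decreasing degree order (NNO)
    (hu : Function.Injective u) (huA : ∀ i, u i ∈ A \ A1)
    (huAll : ∀ x ∈ A \ A1, ∃ i, u i = x)
    (humono : ∀ i j : Fin p, i ≤ j → G.degree (u i) ≤ G.degree (u j))
    -- `v` enumerates `B \ B1` in non-decreasing degree order (NNO)
    (hv : Function.Injective v) (hvB : ∀ j, v j ∈ B \ B1)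
    (hvAll : ∀ y ∈ B \ B1, ∃ j, v j = y)
    (hvmono : ∀ i j : Fin q, i ≤ j → G.degree (v i) ≤ G.degree (v j))
    (hcard : A.card = B.card + 1)
    (hham : ∃ (a b : V) (w : G.Walk a b), w.IsHamiltonian) :
    (∀ g : Fin p, (g : ℕ) + 1 ≤ G.degree (u g)) ∧
      (∀ h : Fin q, (h : ℕ) + 1 < G.degree (v h)) :=
  stmt9_general G A B A1 B1 u v hconn hbip hp5 hmax hu huA humono hv hvB hvmono hcard hham
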